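/- Let γ > 1/2 and ω ∈ ℝ. If x, y ∈ ℝ satisfy |x − y| > (1/2)(⟨x+ω⟩ + ⟨y+ω⟩), then |∫_x^y (⟨s+ω⟩^{-2γ} − ⟨x+ω⟩^{-γ}⟨y+ω⟩^{-γ}) ds| ≤ C (1 + |x−y| ⟨x+ω⟩^{-γ} ⟨y+ω⟩^{-γ}), for a constant C depending only on γ. -/
import Mathlib

open MeasureTheory

/-- The Japanese bracket `⟨t⟩ = (1 + t²)^{1/2}`. -/
noncomputable def jb (t : ℝ) : ℝ := Real.sqrt (1 + t ^ 2)

lemma jb_pos (t : ℝ) : 0 < jb t := Real.sqrt_pos.2 (by positivity)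

lemma jb_cont : Continuous jb := by
  unfold jb; fun_prop

lemma jb_ge (t : ℝ) : (1 + |t|) / 2 ≤ jb t := by
  have h1 : (1:ℝ) ≤ jb t := by
    rw [jb]
    nlinarith [Real.sq_sqrt (show (0:ℝ) ≤ 1 + t ^ 2 by positivity),
      Real.sqrt_nonneg (1 + t ^ 2)]
  have h2 : |t| ≤ jb t := by
    rw [jb, ← Real.sqrt_sq_eq_abs]
    exact Real.sqrt_le_sqrt (by nlinarith)
  linarith

lemma jb_rpow_integrable {r : ℝ} (hr : 1 < r) :
    Integrable (fun s : ℝ => jb s ^ (-r)) := by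
  have h1 : Integrable (fun s : ℝ => (2:ℝ) ^ r * (1 + ‖s‖) ^ (-r)) :=
    (integrable_one_add_norm (E := ℝ) (by simpa using hr)).const_mul _
  refine h1.mono' ?_ ?_
  · exact ((jb_cont.rpow_const (fun t => Or.inl (jb_pos t).ne')).aestronglyMeasurable)
  · filter_upwards with s
    have hb : 0 < (1 + |s|) / 2 := by positivity
    have hle : jb s ^ (-r) ≤ ((1 + |s|) / 2) ^ (-r) :=
      Real.rpow_le_rpow_of_nonpos hb (jb_ge s) (by linarith)
    have heq : ((1 + |s|) / 2) ^ (-r) = 2 ^ r * (1 + |s|) ^ (-r) := by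
      rw [Real.div_rpow (by positivity) (by norm_num), Real.rpow_neg (by positivity),
        Real.rpow_neg (by norm_num)]
      field_simp
    rw [Real.norm_eq_abs, abs_of_nonneg (Real.rpow_nonneg (jb_pos s).le _),
      Real.norm_eq_abs]
    calc jb s ^ (-r) ≤ ((1 + |s|) / 2) ^ (-r) := hle
      _ = 2 ^ r * (1 + |s|) ^ (-r) := heq
      _ ≤ 2 ^ r * (1 + |s|) ^ (-r) := le_rfl

/-- Far-off-diagonal remainder estimate for the weight decomposition. -/
theorem remainder_far_off_diagonal (γ : ℝ) (hγ : 1 / 2 < γ) :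
    ∃ C > 0, ∀ (ω x y : ℝ),
      (1 / 2) * (jb (x + ω) + jb (y + ω)) < |x - y| →
      |∫ s in x..y,
          (jb (s + ω) ^ (-(2 * γ)) - jb (x + ω) ^ (-γ) * jb (y + ω) ^ (-γ))| ≤
        C * (1 + |x - y| * jb (x + ω) ^ (-γ) * jb (y + ω) ^ (-γ)) := by
  have h2γ : 1 < 2 * γ := by linarith
  have hint := jb_rpow_integrable h2γ
  set C₀ : ℝ := ∫ s : ℝ, jb s ^ (-(2 * γ)) with hC₀
  have hC₀nn : 0 ≤ C₀ := integral_nonneg fun s => Real.rpow_nonneg (jb_pos s).le _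
  refine ⟨C₀ + 1, by linarith, fun ω x y _ => ?_⟩
  set B : ℝ := jb (x + ω) ^ (-γ) * jb (y + ω) ^ (-γ) with hB
  have hBnn : 0 ≤ B := mul_nonneg (Real.rpow_nonneg (jb_pos _).le _) (Real.rpow_nonneg (jb_pos _).le _)
  have hintω : Integrable (fun s : ℝ => jb (s + ω) ^ (-(2 * γ))) := hint.comp_add_right ω
  have hcont : Continuous (fun s : ℝ => jb (s + ω) ^ (-(2 * γ))) := by
    apply Continuous.rpow_const
    · exact jb_cont.comp (continuous_id.add continuous_const)
    · exact fun t => Or.inl (jb_pos _).ne'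
  have hsplit : (∫ s in x..y, (jb (s + ω) ^ (-(2 * γ)) - B))
      = (∫ s in x..y, jb (s + ω) ^ (-(2 * γ))) - (y - x) * B := by
    rw [intervalIntegral.integral_sub (hcont.intervalIntegrable x y)
      (intervalIntegrable_const), intervalIntegral.integral_const, smul_eq_mul]
  have hbound1 : |∫ s in x..y, jb (s + ω) ^ (-(2 * γ))| ≤ C₀ := by
    have h1 := intervalIntegral.norm_integral_le_integral_norm_uIoc
      (f := fun s => jb (s + ω) ^ (-(2 * γ))) (a := x) (b := y) (μ := volume)
    simp only [Real.norm_eq_abs] at h1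
    have h2 : (∫ s in Set.uIoc x y, ‖jb (s + ω) ^ (-(2 * γ))‖)
        = ∫ s in Set.uIoc x y, jb (s + ω) ^ (-(2 * γ)) := by
      congr 1; ext s
      exact abs_of_nonneg (Real.rpow_nonneg (jb_pos _).le _)
    have h3 : (∫ s in Set.uIoc x y, jb (s + ω) ^ (-(2 * γ)))
        ≤ ∫ s : ℝ, jb (s + ω) ^ (-(2 * γ)) :=
      setIntegral_le_integral hintω
        (Filter.Eventually.of_forall fun s => Real.rpow_nonneg (jb_pos _).le _)
    have h4 : (∫ s : ℝ, jb (s + ω) ^ (-(2 * γ))) = C₀ :=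
      integral_add_right_eq_self (fun s => jb s ^ (-(2 * γ))) ω
    linarith [h1, h2 ▸ h1]
  have habs : |y - x| = |x - y| := abs_sub_comm y x
  calc |∫ s in x..y, (jb (s + ω) ^ (-(2 * γ)) - B)|
      = |(∫ s in x..y, jb (s + ω) ^ (-(2 * γ))) - (y - x) * B| := by rw [hsplit]
    _ ≤ |∫ s in x..y, jb (s + ω) ^ (-(2 * γ))| + |(y - x) * B| := abs_sub _ _
    _ = |∫ s in x..y, jb (s + ω) ^ (-(2 * γ))| + |x - y| * B := by
        rw [abs_mul, abs_of_nonneg hBnn, habs]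
    _ ≤ C₀ + |x - y| * B := by linarith
    _ ≤ (C₀ + 1) * (1 + |x - y| * B) := by nlinarith [abs_nonneg (x - y), mul_nonneg (abs_nonneg (x - y)) hBnn]
    _ = (C₀ + 1) * (1 + |x - y| * jb (x + ω) ^ (-γ) * jb (y + ω) ^ (-γ)) := by rw [hB, mul_assoc]
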